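/- Let X be a separable Banach space, p ∈ (1,∞) and α ∈ (1/p, 1). Then there is a constant c > 0, depending only on α, p and X (in particular independent of T), such that for every T > 0 and every continuous function u : [0,T] → X with finite Gagliardo seminorm [u]_{W^{α,p}(0,T;X)}, one has ∫₀ᵀ ‖u(t) − u(T)‖_X^p dt ≤ c · T^{αp} · [u]_{W^{α,p}(0,T;X)}^p. -/

import Mathlib

/-!
Let `m(δ)` be the `L^p`-mean of `u - u T` over `(T - δ, T)`. Minkowski's inequality in
`L^p((T - δ, T) × (T - δ/2, T))`, applied to `u x - u T = (u x - u y) + (u y - u T)`, gives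
`m(δ) ≤ m(δ/2) + 2^(1/p) δ^(α - 1/p) [u]`, because `|x - y| < δ` there. Along `δ = T / 2^n`
the increments form a geometric series since `α > 1/p`, and `m(T / 2^n) → 0` by continuity
at `T`; hence `m(T) ≤ c T^(α - 1/p) [u]`, and `∫₀ᵀ ‖u t - u T‖^p = T m(T)^p`.
-/

open MeasureTheory Set Filter Topology ProbabilityTheory
open scoped ENNReal

section LpMeans

variable {α β E : Type*} [MeasurableSpace α] [MeasurableSpace β] [NormedAddCommGroup E]
  {p : ℝ}

theorem eLpNorm'_comp_fst {μ : Measure α} {ν : Measure β} [IsProbabilityMeasure ν] {g : α → E}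
    (hg : AEStronglyMeasurable g μ) (hp : 0 < p) :
    eLpNorm' (fun z : α × β => g z.1) p (μ.prod ν) = eLpNorm' g p μ := by
  have h := eLpNorm_comp_measurePreserving (p := ENNReal.ofReal p) hg
    (measurePreserving_fst (μ := μ) (ν := ν))
  rwa [eLpNorm_eq_eLpNorm' (by simpa using hp) ENNReal.ofReal_ne_top,
    eLpNorm_eq_eLpNorm' (by simpa using hp) ENNReal.ofReal_ne_top,
    ENNReal.toReal_ofReal hp.le] at h

theorem eLpNorm'_comp_snd {μ : Measure α} {ν : Measure β} [IsProbabilityMeasure μ] [SFinite ν]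
    {g : β → E} (hg : AEStronglyMeasurable g ν) (hp : 0 < p) :
    eLpNorm' (fun z : α × β => g z.2) p (μ.prod ν) = eLpNorm' g p ν := by
  have h := eLpNorm_comp_measurePreserving (p := ENNReal.ofReal p) hg
    (measurePreserving_snd (μ := μ) (ν := ν))
  rwa [eLpNorm_eq_eLpNorm' (by simpa using hp) ENNReal.ofReal_ne_top,
    eLpNorm_eq_eLpNorm' (by simpa using hp) ENNReal.ofReal_ne_top,
    ENNReal.toReal_ofReal hp.le] at h

theorem eLpNorm'_sub_const_le_prod_add {μ ν : Measure α} [IsProbabilityMeasure μ]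
    [IsProbabilityMeasure ν] {f : α → E} (hfμ : AEStronglyMeasurable f μ)
    (hfν : AEStronglyMeasurable f ν) (c : E) (hp : 1 ≤ p) :
    eLpNorm' (fun x => f x - c) p μ ≤
      eLpNorm' (fun z : α × α => f z.1 - f z.2) p (μ.prod ν) + eLpNorm' (fun y => f y - c) p ν := by
  have hp0 : 0 < p := zero_lt_one.trans_le hp
  rw [← eLpNorm'_comp_fst (ν := ν) (g := fun x => f x - c) (hfμ.sub aestronglyMeasurable_const) hp0,
    ← eLpNorm'_comp_snd (μ := μ) (g := fun y => f y - c) (hfν.sub aestronglyMeasurable_const) hp0]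
  calc eLpNorm' (fun z : α × α => f z.1 - c) p (μ.prod ν)
      = eLpNorm' ((fun z : α × α => f z.1 - f z.2) + fun z => f z.2 - c) p (μ.prod ν) := by
        simp_rw [Pi.add_def, sub_add_sub_cancel]
    _ ≤ _ := eLpNorm'_add_le (hfμ.comp_fst.sub hfν.comp_snd)
        (hfν.comp_snd.sub aestronglyMeasurable_const) hp

theorem setLIntegral_enorm_rpow_eq_mul_eLpNorm'_cond {μ : Measure α} {s : Set α} (f : α → E)
    (hs0 : μ s ≠ 0) (hs : μ s ≠ ∞) (hp : 0 < p) :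
    ∫⁻ x in s, ‖f x‖ₑ ^ p ∂μ = μ s * eLpNorm' f p μ[|s] ^ p := by
  rw [eLpNorm'_eq_lintegral_enorm, ← ENNReal.rpow_mul, one_div_mul_cancel hp.ne', ENNReal.rpow_one,
    ProbabilityTheory.cond, lintegral_smul_measure, smul_eq_mul, ← mul_assoc,
    ENNReal.mul_inv_cancel hs0 hs, one_mul]

end LpMeans

theorem ENNReal.le_tsum_of_le_add_succ {a b : ℕ → ℝ≥0∞} (h : ∀ n, a n ≤ b n + a (n + 1))
    (ha : Tendsto a atTop (𝓝 0)) : a 0 ≤ ∑' n, b n := by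
  have hpartial : ∀ N, a 0 ≤ ∑ n ∈ Finset.range N, b n + a N := by
    intro N
    induction N with
    | zero => simp
    | succ N ih =>
      calc a 0 ≤ ∑ n ∈ Finset.range N, b n + (b N + a (N + 1)) := ih.trans (by gcongr; exact h N)
        _ = _ := by rw [Finset.sum_range_succ, add_assoc]
  refine ge_of_tendsto (by simpa using (tendsto_const_nhds (x := ∑' n, b n)).add ha) ?_
  exact Eventually.of_forall fun N => (hpartial N).trans (by gcongr; exact ENNReal.sum_le_tsum _)

theorem ENNReal.tsum_ofReal_mul_div_two_pow_rpow {A T γ : ℝ} (hA : 0 ≤ A) (hT : 0 ≤ T)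
    (hγ : 0 < γ) :
    ∑' n : ℕ, ENNReal.ofReal (A * (T / 2 ^ n) ^ γ) =
      ENNReal.ofReal (A * T ^ γ / (1 - (1 / 2) ^ γ)) := by
  have hr0 : 0 ≤ (1 / 2 : ℝ) ^ γ := by positivity
  have hr1 : (1 / 2 : ℝ) ^ γ < 1 := Real.rpow_lt_one (by norm_num) (by norm_num) hγ
  have hterm : ∀ n : ℕ, A * (T / 2 ^ n) ^ γ = A * T ^ γ * ((1 / 2) ^ γ) ^ n := fun n => by
    rw [Real.rpow_pow_comm (by norm_num), div_eq_mul_one_div T, one_div_pow,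
      Real.mul_rpow hT (by positivity), mul_assoc]
  simp_rw [hterm]
  rw [← ENNReal.ofReal_tsum_of_nonneg (fun n => by positivity)
      ((summable_geometric_of_lt_one hr0 hr1).mul_left _),
    tsum_mul_left, tsum_geometric_of_lt_one hr0 hr1, div_eq_mul_inv (A * T ^ γ)]

theorem tendsto_div_two_pow_nhdsGT {T : ℝ} (hT : 0 < T) :
    Tendsto (fun n : ℕ => T / 2 ^ n) atTop (𝓝[>] 0) := by
  refine tendsto_nhdsWithin_iff.2 ⟨?_, Eventually.of_forall fun n => mem_Ioi.2 (by positivity)⟩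
  convert (tendsto_pow_atTop_nhds_zero_of_lt_one (by norm_num : (0:ℝ) ≤ 1 / 2)
    (by norm_num)).const_mul T using 1
  · ext n; rw [one_div_pow, mul_one_div]
  · simp

section EndpointEstimate

variable {E : Type*} [NormedAddCommGroup E]

noncomputable def gagliardoLIntegral (p α : ℝ) (u : ℝ → E) (s : Set ℝ) : ℝ≥0∞ :=
  ∫⁻ z in s ×ˢ s, ENNReal.ofReal (‖u z.1 - u z.2‖ ^ p / |z.1 - z.2| ^ (1 + α * p))

theorem setLIntegral_enorm_sub_rpow_le_gagliardoLIntegral {u : ℝ → E} {s : Set ℝ}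
    (hs : MeasurableSet s) {p α δ : ℝ} (hp : 0 < p) (hα : 0 ≤ α)
    (hδ : ∀ x ∈ s, ∀ y ∈ s, |x - y| ≤ δ) :
    ∫⁻ z in s ×ˢ s, ‖u z.1 - u z.2‖ₑ ^ p ≤
      ENNReal.ofReal (δ ^ (1 + α * p)) * gagliardoLIntegral p α u s := by
  rw [gagliardoLIntegral, ← lintegral_const_mul' _ _ ENNReal.ofReal_ne_top]
  refine setLIntegral_mono' (hs.prod hs) fun z hz => ?_
  rw [← ofReal_norm, ENNReal.ofReal_rpow_of_nonneg (norm_nonneg _) hp.le,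
    ← ENNReal.ofReal_mul' (by positivity)]
  refine ENNReal.ofReal_le_ofReal ?_
  rcases eq_or_ne z.1 z.2 with hz12 | hz12
  · simp [hz12, Real.zero_rpow hp.ne']
  have hd : 0 < |z.1 - z.2| ^ (1 + α * p) :=
    Real.rpow_pos_of_pos (abs_pos.2 (sub_ne_zero.2 hz12)) _
  rw [mul_div_assoc', le_div_iff₀ hd, mul_comm]
  exact mul_le_mul_of_nonneg_right
    (Real.rpow_le_rpow (abs_nonneg _) (hδ _ hz.1 _ hz.2) (by positivity)) (by positivity)

theorem gagliardoLIntegral_congr {u v : ℝ → E} {p α : ℝ} {s : Set ℝ} (hs : MeasurableSet s)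
    (h : EqOn u v s) : gagliardoLIntegral p α u s = gagliardoLIntegral p α v s :=
  setLIntegral_congr_fun (hs.prod hs) fun z hz => by rw [h hz.1, h hz.2]

theorem gagliardoLIntegral_mono {u : ℝ → E} {p α : ℝ} {s t : Set ℝ} (h : s ⊆ t) :
    gagliardoLIntegral p α u s ≤ gagliardoLIntegral p α u t :=
  lintegral_mono_set (prod_mono h h)

noncomputable def endpointConst (p α : ℝ) : ℝ :=
  2 ^ (1 / p) / (1 - (1 / 2) ^ (α - 1 / p))

theorem endpointConst_pos {p α : ℝ} (hα : 1 / p < α) : 0 < endpointConst p α :=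
  div_pos (by positivity) (sub_pos.2 (Real.rpow_lt_one (by norm_num) (by norm_num) (sub_pos.2 hα)))

noncomputable def endpointDeviation (p : ℝ) (w : ℝ → E) (T δ : ℝ) : ℝ≥0∞ :=
  eLpNorm' (fun t => w t - w T) p volume[|Ioo (T - δ) T]

theorem isProbabilityMeasure_cond_Ioo {a b : ℝ} (h : a < b) :
    IsProbabilityMeasure volume[|Ioo a b] :=
  cond_isProbabilityMeasure_of_finite (by simp [h]) (by simp)

theorem cond_Ioo_prod_cond_Ioo_half {T δ : ℝ} (hδ : 0 < δ) :
    volume[|Ioo (T - δ) T].prod volume[|Ioo (T - δ / 2) T] =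
      ENNReal.ofReal (2 / δ ^ 2) • volume.restrict (Ioo (T - δ) T ×ˢ Ioo (T - δ / 2) T) := by
  rw [ProbabilityTheory.cond, ProbabilityTheory.cond, Measure.prod_smul_left,
    Measure.prod_smul_right, smul_smul, Measure.prod_restrict, ← Measure.volume_eq_prod,
    Real.volume_Ioo, Real.volume_Ioo, sub_sub_cancel, sub_sub_cancel,
    ← ENNReal.ofReal_inv_of_pos hδ, ← ENNReal.ofReal_inv_of_pos (half_pos hδ),
    ← ENNReal.ofReal_mul (by positivity)]
  congr 2
  field_simp

theorem endpointDeviation_le_add_half {w : ℝ → E} (hw : Continuous w) {p α T δ : ℝ}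
    (hp : 1 ≤ p) (hα : 0 ≤ α) (hδ : 0 < δ) {s : Set ℝ} (hs : Ioo (T - δ) T ⊆ s) :
    endpointDeviation p w T δ ≤
      ENNReal.ofReal (2 ^ (1 / p) * δ ^ (α - 1 / p)) * gagliardoLIntegral p α w s ^ (1 / p) +
        endpointDeviation p w T (δ / 2) := by
  have hp0 : 0 < p := zero_lt_one.trans_le hp
  have := isProbabilityMeasure_cond_Ioo (a := T - δ) (b := T) (by linarith)
  have := isProbabilityMeasure_cond_Ioo (a := T - δ / 2) (b := T) (by linarith)
  refine (eLpNorm'_sub_const_le_prod_add hw.aestronglyMeasurable hw.aestronglyMeasurable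
    (w T) hp (ν := volume[|Ioo (T - δ / 2) T])).trans (add_le_add ?_ le_rfl)
  have hdiam : ∀ x ∈ Ioo (T - δ) T, ∀ y ∈ Ioo (T - δ) T, |x - y| ≤ δ := fun x hx y hy => by
    rw [abs_sub_le_iff]; constructor <;> linarith [hx.1, hx.2, hy.1, hy.2]
  have hlint : ∫⁻ z in Ioo (T - δ) T ×ˢ Ioo (T - δ / 2) T, ‖w z.1 - w z.2‖ₑ ^ p ≤
      ENNReal.ofReal (δ ^ (1 + α * p)) * gagliardoLIntegral p α w s :=
    calc _ ≤ ∫⁻ z in Ioo (T - δ) T ×ˢ Ioo (T - δ) T, ‖w z.1 - w z.2‖ₑ ^ p :=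
          lintegral_mono_set (prod_mono le_rfl (Ioo_subset_Ioo_left (by linarith)))
      _ ≤ _ := setLIntegral_enorm_sub_rpow_le_gagliardoLIntegral measurableSet_Ioo hp0 hα hdiam
      _ ≤ _ := by gcongr; exact gagliardoLIntegral_mono hs
  have hconst : (2 / δ ^ 2) ^ (1 / p) * (δ ^ (1 + α * p)) ^ (1 / p) =
      2 ^ (1 / p) * δ ^ (α - 1 / p) := by
    have hsplit : δ ^ (1 + α * p) = δ ^ 2 * δ ^ (α * p - 1) := by
      rw [← Real.rpow_two, ← Real.rpow_add hδ]; ring_nf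
    rw [← Real.mul_rpow (by positivity) (by positivity), hsplit,
      show 2 / δ ^ 2 * (δ ^ 2 * δ ^ (α * p - 1)) = 2 * δ ^ (α * p - 1) by field_simp,
      Real.mul_rpow zero_le_two (by positivity), ← Real.rpow_mul hδ.le]
    congr 2
    field_simp
  rw [cond_Ioo_prod_cond_Ioo_half hδ, eLpNorm'_smul_measure hp0.le, eLpNorm'_eq_lintegral_enorm]
  calc _ ≤ ENNReal.ofReal (2 / δ ^ 2) ^ (1 / p) *
        (ENNReal.ofReal (δ ^ (1 + α * p)) * gagliardoLIntegral p α w s) ^ (1 / p) := by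
        gcongr
    _ = _ := by
      rw [ENNReal.mul_rpow_of_nonneg _ _ (by positivity), ← mul_assoc,
        ENNReal.ofReal_rpow_of_nonneg (by positivity) (by positivity),
        ENNReal.ofReal_rpow_of_nonneg (by positivity) (by positivity),
        ← ENNReal.ofReal_mul (by positivity), hconst]

theorem tendsto_endpointDeviation {w : ℝ → E} {p T : ℝ} (hw : ContinuousWithinAt w (Iio T) T)
    (hp : 0 < p) : Tendsto (endpointDeviation p w T) (𝓝[>] 0) (𝓝 0) := by
  refine ENNReal.tendsto_nhds_zero.2 fun ε hε => ?_
  obtain ⟨r, hr0, hrε⟩ := ENNReal.lt_iff_exists_nnreal_btwn.1 hε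
  obtain ⟨η, hη, hwη⟩ := Metric.continuousWithinAt_iff.1 hw r (by exact_mod_cast hr0)
  filter_upwards [Ioo_mem_nhdsGT hη] with δ hδ
  have := isProbabilityMeasure_cond_Ioo (a := T - δ) (b := T) (by linarith [hδ.1])
  have hbound : ∀ᵐ t ∂volume[|Ioo (T - δ) T], ‖w t - w T‖ₑ ≤ ‖(r : ℝ≥0∞)‖ₑ := by
    filter_upwards [ae_cond_mem measurableSet_Ioo] with t ht
    have hdist : dist t T < η := by
      rw [Real.dist_eq, abs_sub_lt_iff]; constructor <;> linarith [ht.1, ht.2, hδ.2]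
    have := hwη (mem_Iio.2 ht.2) hdist
    rw [dist_eq_norm] at this
    simpa [enorm_eq_nnnorm, ← NNReal.coe_le_coe] using this.le
  calc endpointDeviation p w T δ ≤ eLpNorm' (fun _ => (r : ℝ≥0∞)) p volume[|Ioo (T - δ) T] :=
        eLpNorm'_mono_enorm_ae hp.le hbound
    _ = r := by rw [eLpNorm'_const_of_isProbabilityMeasure _ hp, enorm_eq_self]
    _ ≤ ε := hrε.le

theorem endpointDeviation_self_le {w : ℝ → E} (hw : Continuous w) {p α T : ℝ} (hp : 1 ≤ p)
    (hα : 1 / p < α) (hT : 0 < T) :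
    endpointDeviation p w T T ≤
      ENNReal.ofReal (endpointConst p α * T ^ (α - 1 / p)) *
        gagliardoLIntegral p α w (Ioo 0 T) ^ (1 / p) := by
  have hp0 : 0 < p := zero_lt_one.trans_le hp
  have hα0 : 0 ≤ α := ((one_div_pos.2 hp0).trans hα).le
  have hstep : ∀ n : ℕ, endpointDeviation p w T (T / 2 ^ n) ≤
      ENNReal.ofReal (2 ^ (1 / p) * (T / 2 ^ n) ^ (α - 1 / p)) *
          gagliardoLIntegral p α w (Ioo 0 T) ^ (1 / p) +
        endpointDeviation p w T (T / 2 ^ (n + 1)) := fun n => by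
    have hle : T / 2 ^ n ≤ T := div_le_self hT.le (one_le_pow₀ one_le_two)
    rw [pow_succ, ← div_div]
    exact endpointDeviation_le_add_half hw hp hα0 (by positivity)
      (Ioo_subset_Ioo_left (by linarith))
  have h := ENNReal.le_tsum_of_le_add_succ hstep
    ((tendsto_endpointDeviation hw.continuousWithinAt hp0).comp (tendsto_div_two_pow_nhdsGT hT))
  rwa [ENNReal.tsum_mul_right, ENNReal.tsum_ofReal_mul_div_two_pow_rpow (by positivity) hT.le
    (sub_pos.2 hα), pow_zero, div_one, mul_div_right_comm] at h

theorem setLIntegral_Ioo_enorm_sub_rpow_le {w : ℝ → E} (hw : Continuous w) {p α T : ℝ}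
    (hp : 1 ≤ p) (hα : 1 / p < α) (hT : 0 < T) :
    ∫⁻ t in Ioo 0 T, ‖w t - w T‖ₑ ^ p ≤
      ENNReal.ofReal (endpointConst p α ^ p * T ^ (α * p)) *
        gagliardoLIntegral p α w (Ioo 0 T) := by
  have hp0 : 0 < p := zero_lt_one.trans_le hp
  have hc := (endpointConst_pos hα).le
  have hI : ∫⁻ t in Ioo 0 T, ‖w t - w T‖ₑ ^ p =
      ENNReal.ofReal T * endpointDeviation p w T T ^ p := by
    rw [endpointDeviation, sub_self]
    simpa using setLIntegral_enorm_rpow_eq_mul_eLpNorm'_cond (fun t => w t - w T)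
      (μ := volume) (s := Ioo 0 T) (by simpa using hT) (by simp) hp0
  rw [hI]
  calc _ ≤ ENNReal.ofReal T *
        (ENNReal.ofReal (endpointConst p α * T ^ (α - 1 / p)) *
          gagliardoLIntegral p α w (Ioo 0 T) ^ (1 / p)) ^ p := by
        gcongr; exact endpointDeviation_self_le hw hp hα hT
    _ = _ := by
      rw [ENNReal.mul_rpow_of_nonneg _ _ hp0.le, ← ENNReal.rpow_mul, one_div_mul_cancel hp0.ne',
        ENNReal.rpow_one, ENNReal.ofReal_rpow_of_nonneg (by positivity) hp0.le, ← mul_assoc,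
        ← ENNReal.ofReal_mul hT.le]
      congr 2
      rw [Real.mul_rpow hc (by positivity), ← Real.rpow_mul hT.le,
        mul_comm T, mul_assoc, ← Real.rpow_add_one hT.ne']
      congr 2
      field_simp
      ring

theorem setLIntegral_Ioo_enorm_sub_rpow_le_of_continuousOn {u : ℝ → E} {p α T : ℝ}
    (hu : ContinuousOn u (Icc 0 T)) (hp : 1 ≤ p) (hα : 1 / p < α) (hT : 0 < T) :
    ∫⁻ t in Ioo 0 T, ‖u t - u T‖ₑ ^ p ≤
      ENNReal.ofReal (endpointConst p α ^ p * T ^ (α * p)) *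
        gagliardoLIntegral p α u (Ioo 0 T) := by
  set w := IccExtend hT.le ((Icc 0 T).domRestrict u)
  have hwu : EqOn w u (Ioo 0 T) := fun t ht => IccExtend_of_mem _ _ (Ioo_subset_Icc_self ht)
  have hwT : w T = u T := IccExtend_of_mem _ _ (right_mem_Icc.2 hT.le)
  calc ∫⁻ t in Ioo 0 T, ‖u t - u T‖ₑ ^ p = ∫⁻ t in Ioo 0 T, ‖w t - w T‖ₑ ^ p :=
        setLIntegral_congr_fun measurableSet_Ioo fun t ht => by rw [hwu ht, hwT]
    _ ≤ _ := setLIntegral_Ioo_enorm_sub_rpow_le hu.domRestrict.Icc_extend' hp hα hT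
    _ = _ := by rw [gagliardoLIntegral_congr measurableSet_Ioo hwu]

theorem integral_Ioo_norm_sub_rpow_le {u : ℝ → E} {p α T : ℝ}
    (hu : ContinuousOn u (Icc 0 T)) (hp : 1 ≤ p) (hα : 1 / p < α) (hT : 0 < T)
    (hint : IntegrableOn (fun z : ℝ × ℝ => ‖u z.1 - u z.2‖ ^ p / |z.1 - z.2| ^ (1 + α * p))
      (Ioo 0 T ×ˢ Ioo 0 T)) :
    ∫ t in Ioo 0 T, ‖u t - u T‖ ^ p ≤
      endpointConst p α ^ p * T ^ (α * p) *
        ∫ z in Ioo 0 T ×ˢ Ioo 0 T, ‖u z.1 - u z.2‖ ^ p / |z.1 - z.2| ^ (1 + α * p) := by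
  have hp0 : 0 < p := zero_lt_one.trans_le hp
  have hc : 0 ≤ endpointConst p α ^ p * T ^ (α * p) := by
    have := endpointConst_pos hα
    positivity
  have hmeas : AEStronglyMeasurable (fun t => ‖u t - u T‖ ^ p) (volume.restrict (Ioo 0 T)) :=
    (((hu.mono Ioo_subset_Icc_self).sub continuousOn_const).norm.rpow_const
      fun _ _ => Or.inr hp0.le).aestronglyMeasurable measurableSet_Ioo
  rw [integral_eq_lintegral_of_nonneg_ae (ae_of_all _ fun t => by positivity) hmeas,
    integral_eq_lintegral_of_nonneg_ae (ae_of_all _ fun z => by positivity) hint.1,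
    ← ENNReal.toReal_ofReal hc, ← ENNReal.toReal_mul]
  refine ENNReal.toReal_mono (ENNReal.mul_ne_top ENNReal.ofReal_ne_top hint.lintegral_lt_top.ne) ?_
  refine (lintegral_congr fun t => ?_).trans_le
    (setLIntegral_Ioo_enorm_sub_rpow_le_of_continuousOn hu hp hα hT)
  rw [← ofReal_norm, ENNReal.ofReal_rpow_of_nonneg (norm_nonneg _) hp0.le]

end EndpointEstimate

theorem stmt0 (X : Type*) [NormedAddCommGroup X]
    (p α : ℝ) (hp : 1 < p) (hα1 : 1 / p < α) :
    ∃ c : ℝ, 0 < c ∧ ∀ T : ℝ, 0 < T → ∀ u : ℝ → X,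
      ContinuousOn u (Icc 0 T) →
      IntegrableOn (fun z : ℝ × ℝ => ‖u z.1 - u z.2‖ ^ p / |z.1 - z.2| ^ (1 + α * p))
        (Ioo 0 T ×ˢ Ioo 0 T) →
      (∫ t in Ioo 0 T, ‖u t - u T‖ ^ p) ≤
        c * T ^ (α * p) *
          ∫ z in Ioo 0 T ×ˢ Ioo 0 T, ‖u z.1 - u z.2‖ ^ p / |z.1 - z.2| ^ (1 + α * p) :=
  ⟨endpointConst p α ^ p, Real.rpow_pos_of_pos (endpointConst_pos hα1) p,
    fun T hT u hu hint => integral_Ioo_norm_sub_rpow_le hu hp.le hα1 hT hint⟩
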